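/- arXiv:2307.00436 — 3 statements merged into one kernel-verified Lean document; each statement's English description precedes it below -/
import Mathlib

section
/- For any 2-adic integer z, z belongs to ℕ (i.e., z has only finitely many nonzero 2-adic digits) if and only if the sequence n ↦ #₁([z]_{2^n}) is eventually constant; and z ∈ ℤ₂ \ ℕ if and only if #₁([z]_{2^n}) → ∞ as n → ∞. -/
open Filter

/-- `#₁ m`: the number of `1`s in the binary expansion of `m`. -/
def numOnes (m : ℕ) : ℕ := (Nat.digits 2 m).count 1

private lemma digits_len_le_of_lt_pow {a n : ℕ} (h : a < 2 ^ n) :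
    (Nat.digits 2 a).length ≤ n := by
  rcases eq_or_ne a 0 with rfl | ha
  · simp
  · have h1 : 2 ^ (Nat.digits 2 a).length ≤ 2 * a :=
      Nat.base_pow_length_digits_le 2 a one_lt_two ha
    have h2 : 2 * a < 2 ^ (n + 1) := by
      rw [pow_succ, mul_comm]; omega
    have := lt_of_le_of_lt h1 h2
    have := (pow_lt_pow_iff_right₀ (a := 2) one_lt_two).mp this
    omega

private lemma numOnes_add_pow {a n : ℕ} (h : a < 2 ^ n) :
    numOnes (a + 2 ^ n) = numOnes a + 1 := by
  have hlen : (Nat.digits 2 a).length ≤ n := digits_len_le_of_lt_pow h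
  set k := n - (Nat.digits 2 a).length with hk
  have hnk : (Nat.digits 2 a).length + k = n := by omega
  have := Nat.digits_append_zeroes_append_digits (b := 2) (k := k) (m := 1) (n := a)
    one_lt_two one_pos
  rw [hnk] at this
  simp only [mul_one] at this
  rw [numOnes, numOnes, ← this]
  simp [List.count_append, List.count_replicate]

private lemma appr_step (z : ℤ_[2]) (n : ℕ) :
    z.appr (n + 1) = z.appr n ∨ z.appr (n + 1) = z.appr n + 2 ^ n := by
  obtain ⟨c, hc⟩ := PadicInt.dvd_appr_sub_appr z n (n + 1) (Nat.le_succ n)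
  have hmono : z.appr n ≤ z.appr (n + 1) := PadicInt.appr_mono z (Nat.le_succ n)
  have h1 : z.appr (n + 1) < 2 ^ (n + 1) := PadicInt.appr_lt z (n + 1)
  have hc' : z.appr (n + 1) = z.appr n + 2 ^ n * c := by omega
  have : c < 2 := by
    by_contra hge
    have : 2 ^ n * 2 ≤ 2 ^ n * c := Nat.mul_le_mul_left _ (by omega)
    rw [← pow_succ] at this
    omega
  interval_cases c
  · left; omega
  · right; omega

private lemma numOnes_appr_mono (z : ℤ_[2]) :
    Monotone fun n => numOnes (z.appr n) := by
  apply monotone_nat_of_le_succ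
  intro n
  rcases appr_step z n with h | h
  · rw [h]
  · rw [h, numOnes_add_pow (PadicInt.appr_lt z n)]
    omega

private lemma appr_succ_eq_of_numOnes_eq (z : ℤ_[2]) (n : ℕ)
    (h : numOnes (z.appr (n + 1)) = numOnes (z.appr n)) :
    z.appr (n + 1) = z.appr n := by
  rcases appr_step z n with h' | h'
  · exact h'
  · rw [h', numOnes_add_pow (PadicInt.appr_lt z n)] at h
    omega

private lemma appr_eq_of_natCast (m n : ℕ) (hm : m < 2 ^ n) :
    ((m : ℤ_[2])).appr n = m := by
  have h1 : (m : ℤ_[2]) - (((m : ℤ_[2]).appr n : ℕ) : ℤ_[2]) ∈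
      Ideal.span {((2 : ℤ_[2])) ^ n} := by
    have := PadicInt.appr_spec n (m : ℤ_[2])
    simpa using this
  have h2 : (m : ℤ_[2]) - ((m : ℕ) : ℤ_[2]) ∈ Ideal.span {((2 : ℤ_[2])) ^ n} := by
    simp
  have key : ((m : ℕ) : ZMod (2 ^ n)) = (((m : ℤ_[2]).appr n : ℕ) : ZMod (2 ^ n)) :=
    PadicInt.zmod_congr_of_sub_mem_span n (m : ℤ_[2]) _ _ h2 h1
  have hlt : (m : ℤ_[2]).appr n < 2 ^ n := PadicInt.appr_lt _ n
  have := congrArg ZMod.val key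
  rw [ZMod.val_natCast_of_lt hm, ZMod.val_natCast_of_lt hlt] at this
  exact this.symm

private lemma eq_natCast_of_appr_stable (z : ℤ_[2]) (N : ℕ)
    (h : ∀ n, N ≤ n → z.appr n = z.appr N) : z = ((z.appr N : ℕ) : ℤ_[2]) := by
  have key : ∀ n, N ≤ n → ‖z - ((z.appr N : ℕ) : ℤ_[2])‖ ≤ (2 : ℝ) ^ (-(n : ℤ)) := by
    intro n hn
    rw [show ((z.appr N : ℕ) : ℤ_[2]) = ((z.appr n : ℕ) : ℤ_[2]) by rw [h n hn]]
    exact (PadicInt.norm_le_pow_iff_mem_span_pow _ n).mpr (PadicInt.appr_spec n z)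
  have hz : ‖z - ((z.appr N : ℕ) : ℤ_[2])‖ = 0 := by
    by_contra hne
    have hpos : 0 < ‖z - ((z.appr N : ℕ) : ℤ_[2])‖ :=
      lt_of_le_of_ne (norm_nonneg _) (Ne.symm hne)
    obtain ⟨n, hn⟩ := exists_pow_lt_of_lt_one hpos (show (1 : ℝ) / 2 < 1 by norm_num)
    have := key (max n N) (le_max_right _ _)
    have h2 : ((1 : ℝ) / 2) ^ (max n N) ≤ (1 / 2) ^ n :=
      pow_le_pow_of_le_one (by norm_num) (by norm_num) (le_max_left _ _)
    have h3 : (2 : ℝ) ^ (-((max n N : ℕ) : ℤ)) = ((1 : ℝ) / 2) ^ (max n N) := by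
      rw [zpow_neg, zpow_natCast, one_div, inv_pow]
    rw [h3] at this
    linarith
  exact sub_eq_zero.mp (norm_eq_zero.mp hz)

/-- The digit count principle. -/
theorem digit_count_principle (z : ℤ_[2]) :
    ((∃ m : ℕ, z = (m : ℤ_[2])) ↔
      ∃ c : ℕ, ∀ᶠ n in atTop, numOnes (z.appr n) = c) ∧
    ((¬ ∃ m : ℕ, z = (m : ℤ_[2])) ↔
      Tendsto (fun n => numOnes (z.appr n)) atTop atTop) := by
  set f : ℕ → ℕ := fun n => numOnes (z.appr n) with hf
  have hmono : Monotone f := numOnes_appr_mono z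
  -- first iff
  have first : (∃ m : ℕ, z = (m : ℤ_[2])) ↔ ∃ c : ℕ, ∀ᶠ n in atTop, f n = c := by
    constructor
    · rintro ⟨m, rfl⟩
      refine ⟨numOnes m, eventually_atTop.mpr ⟨m, fun n hn => ?_⟩⟩
      have : m < 2 ^ n := lt_of_lt_of_le (Nat.lt_two_pow_self (n := m))
        (Nat.pow_le_pow_right (by norm_num) hn)
      simp only [hf]
      rw [appr_eq_of_natCast m n this]
    · rintro ⟨c, hc⟩
      obtain ⟨N, hN⟩ := eventually_atTop.mp hc
      have stable : ∀ n, N ≤ n → z.appr n = z.appr N := by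
        intro n hn
        induction n, hn using Nat.le_induction with
        | base => rfl
        | succ n hn ih =>
          rw [← ih]
          apply appr_succ_eq_of_numOnes_eq
          have h1 := hN (n + 1) (by omega)
          have h2 := hN n hn
          simp only [hf] at h1 h2
          rw [h1, h2]
      exact ⟨z.appr N, eq_natCast_of_appr_stable z N stable⟩
  refine ⟨first, ?_⟩
  -- dichotomy for monotone nat sequences
  have dich : (∃ c : ℕ, ∀ᶠ n in atTop, f n = c) ∨ Tendsto f atTop atTop := by
    by_cases h : ∃ N, ∀ n, N ≤ n → f n = f N
    · obtain ⟨N, hN⟩ := h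
      exact Or.inl ⟨f N, eventually_atTop.mpr ⟨N, hN⟩⟩
    · push_neg at h
      right
      apply tendsto_atTop_atTop_of_monotone hmono
      intro b
      induction b with
      | zero => exact ⟨0, Nat.zero_le _⟩
      | succ b ih =>
        obtain ⟨n, hn⟩ := ih
        obtain ⟨n', hn', hne⟩ := h n
        have : f n ≤ f n' := hmono hn'
        exact ⟨n', by omega⟩
  have excl : ¬ ((∃ c : ℕ, ∀ᶠ n in atTop, f n = c) ∧ Tendsto f atTop atTop) := by
    rintro ⟨⟨c, hc⟩, ht⟩
    have h1 : ∀ᶠ n in atTop, c + 1 ≤ f n := ht (eventually_ge_atTop (c + 1))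
    have := (hc.and h1).exists
    obtain ⟨n, h2, h3⟩ := this
    omega
  constructor
  · intro hne
    rcases dich with h | h
    · exact absurd (first.mpr h) hne
    · exact h
  · intro ht hex
    exact excl ⟨first.mp hex, ht⟩
end

section
/- Define B₂ : ℕ → ℚ by B₂(0) = 0 and B₂(n) = n/(1 − 2^{λ₂(n)}) for n ≥ 1. Then for n ≥ 1, B₂(n), viewed as a 2-adic integer, has 2-adic digit sequence equal to the periodic repetition of the λ₂(n) binary digits of n. -/
/-- `λ₂ m`: the number of binary digits of `m`. -/
def lambda2 (m : ℕ) : ℕ := (Nat.digits 2 m).length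

/-- The `i`-th digit of `n` in base `b` is `n / b ^ i % b`. -/
lemma digits_getD (b : ℕ) (hb : 1 < b) (i : ℕ) :
    ∀ n : ℕ, (Nat.digits b n).getD i 0 = n / b ^ i % b := by
  induction i with
  | zero =>
    intro n
    rcases Nat.eq_zero_or_pos n with h | h
    · subst h; simp
    · rw [Nat.digits_def' hb h]
      simp
  | succ i IH =>
    intro n
    rcases Nat.eq_zero_or_pos n with h | h
    · subst h; simp
    · rw [Nat.digits_def' hb h]
      simp only [List.getD_cons_succ]
      rw [IH (n / b), Nat.div_div_eq_div_mul, ← pow_succ']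

/-- Uniqueness of the approximation: any natural `< 2^K` congruent to `z`
mod `2^K` equals `z.appr K`. -/
lemma appr_unique (z : ℤ_[2]) (K a : ℕ) (ha : a < 2 ^ K)
    (hd : (2 : ℤ_[2]) ^ K ∣ z - (a : ℤ_[2])) : z.appr K = a := by
  have h1 := PadicInt.appr_spec K z
  have h2 : z - (a : ℤ_[2]) ∈ Ideal.span {(2 : ℤ_[2]) ^ K} := by
    rwa [Ideal.mem_span_singleton]
  have h3 : z - (z.appr K : ℤ_[2]) ∈ Ideal.span {((2 : ℕ) : ℤ_[2]) ^ K} := by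
    simpa using h1
  have h4 : z - (a : ℤ_[2]) ∈ Ideal.span {((2 : ℕ) : ℤ_[2]) ^ K} := by
    simpa using h2
  have h5 := PadicInt.zmod_congr_of_sub_mem_span K z _ _ h3 h4
  have h6 := congrArg ZMod.val h5
  rwa [ZMod.val_cast_of_lt (z.appr_lt K), ZMod.val_cast_of_lt ha] at h6

/-- For `n ≥ 1`, the `2`-adic integer `B₂(n) = n/(1 - 2^{λ₂(n)})` has 2-adic digit
sequence the periodic repetition of the `λ₂(n)` binary digits of `n`: its `k`-th
2-adic digit equals the `(k mod λ₂(n))`-th binary digit of `n`. -/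
theorem B2_digits_periodic (n : ℕ) (hn : 1 ≤ n) (z : ℤ_[2])
    (hz : (1 - 2 ^ lambda2 n) * z = (n : ℤ_[2])) (k : ℕ) :
    z.appr (k + 1) / 2 ^ k = (Nat.digits 2 n).getD (k % lambda2 n) 0 := by
  set L := lambda2 n with hLdef
  have hL : 1 ≤ L :=
    List.length_pos_iff.2 (Nat.digits_ne_nil_iff_ne_zero.2 (by omega))
  have hnL : n < 2 ^ L := Nat.lt_base_pow_length_digits (by norm_num)
  have key : z - (n : ℤ_[2]) = 2 ^ L * z := by linear_combination hz
  induction k using Nat.strong_induction_on with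
  | _ k IH =>
  rcases lt_or_ge k L with hkL | hkL
  · -- base case: k < L
    have happr : z.appr (k + 1) = n % 2 ^ (k + 1) := by
      apply appr_unique
      · exact Nat.mod_lt _ (by positivity)
      · have h1 : (2 : ℤ_[2]) ^ (k + 1) ∣ z - (n : ℤ_[2]) := by
          refine dvd_trans (pow_dvd_pow 2 (by omega : k + 1 ≤ L)) ⟨z, key⟩
        have h2 : (2 : ℤ_[2]) ^ (k + 1) ∣ (n : ℤ_[2]) - ((n % 2 ^ (k + 1) : ℕ) : ℤ_[2]) := by
          refine ⟨((n / 2 ^ (k + 1) : ℕ) : ℤ_[2]), ?_⟩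
          have h0 := Nat.mod_add_div n (2 ^ (k + 1))
          have h4 : ((n : ℕ) : ℤ_[2]) =
              ((n % 2 ^ (k + 1) + 2 ^ (k + 1) * (n / 2 ^ (k + 1)) : ℕ) : ℤ_[2]) := by rw [h0]
          push_cast at h4
          linear_combination h4
        have h3 : z - ((n % 2 ^ (k + 1) : ℕ) : ℤ_[2]) =
            (z - (n : ℤ_[2])) + ((n : ℤ_[2]) - ((n % 2 ^ (k + 1) : ℕ) : ℤ_[2])) := by ring
        rw [h3]
        exact dvd_add h1 h2
    rw [happr, pow_succ, Nat.mod_mul_right_div_self, Nat.mod_eq_of_lt hkL,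
      digits_getD 2 (by norm_num)]
  · -- inductive step: L ≤ k
    set a := z.appr (k - L + 1) with hadef
    have ha : a < 2 ^ (k - L + 1) := z.appr_lt _
    have hpow : 2 ^ L * 2 ^ (k - L + 1) = 2 ^ (k + 1) := by
      rw [← pow_add]; congr 1; omega
    have happr : z.appr (k + 1) = n + 2 ^ L * a := by
      apply appr_unique
      · calc n + 2 ^ L * a < 2 ^ L + 2 ^ L * a := by omega
          _ = 2 ^ L * (a + 1) := by ring
          _ ≤ 2 ^ L * 2 ^ (k - L + 1) := Nat.mul_le_mul_left _ (by omega)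
          _ = 2 ^ (k + 1) := hpow
      · have h1 : z - ((n + 2 ^ L * a : ℕ) : ℤ_[2]) = 2 ^ L * (z - (a : ℤ_[2])) := by
          push_cast
          linear_combination key
        have h2 : (2 : ℤ_[2]) ^ (k - L + 1) ∣ z - (a : ℤ_[2]) := by
          have := PadicInt.appr_spec (k - L + 1) z
          rw [Ideal.mem_span_singleton] at this
          simpa using this
        have hpow' : (2 : ℤ_[2]) ^ L * 2 ^ (k - L + 1) = 2 ^ (k + 1) := by
          rw [← pow_add]; congr 1; omega
        rw [h1, ← hpow']
        exact mul_dvd_mul_left _ h2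
    have hdiv : (n + 2 ^ L * a) / 2 ^ k = a / 2 ^ (k - L) := by
      have hk : 2 ^ k = 2 ^ L * 2 ^ (k - L) := by rw [← pow_add]; congr 1; omega
      rw [hk, ← Nat.div_div_eq_div_mul, Nat.add_mul_div_left _ _ (by positivity),
        Nat.div_eq_of_lt hnL, zero_add]
    have hmod : (k - L) % L = k % L := by
      conv_rhs => rw [show k = L + (k - L) by omega, Nat.add_mod_left]
    rw [happr, hdiv, ← hmod]
    exact IH (k - L) (by omega)
end

section
/- For all n ≥ 1 and all k ∈ ℕ: #₁([B₂(n)]_{2^k}) = ⌊k/λ₂(n)⌋ · #₁(n) + #₁([n]_{2^{k mod λ₂(n)}}). -/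
lemma appr_eq_of {p : ℕ} [Fact p.Prime] (z : ℤ_[p]) {k a : ℕ} (ha : a < p ^ k)
    (h : z - (a : ℤ_[p]) ∈ Ideal.span {(p : ℤ_[p]) ^ k}) : z.appr k = a := by
  have h1 := z.appr_spec k
  have h2 : ((a : ℤ_[p]) - z.appr k) ∈ Ideal.span {(p : ℤ_[p]) ^ k} := by
    have h' := Ideal.sub_mem _ h1 h
    rwa [show z - z.appr k - (z - a) = (a : ℤ_[p]) - z.appr k from by ring] at h'
  have h3 : ((p : ℤ) ^ k) ∣ ((a : ℤ) - z.appr k) := by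
    rw [← PadicInt.norm_int_le_pow_iff_dvd]
    rw [show (((a : ℤ) - z.appr k : ℤ) : ℤ_[p]) = ((a : ℤ_[p]) - z.appr k) by push_cast; ring]
    exact (PadicInt.norm_le_pow_iff_mem_span_pow _ k).mpr h2
  have h4 := z.appr_lt k
  have h5 : ((a : ℤ) - z.appr k) = 0 := by
    apply Int.eq_zero_of_abs_lt_dvd h3
    rw [abs_lt]
    constructor
    · have : (z.appr k : ℤ) < (p : ℤ) ^ k := by exact_mod_cast h4
      omega
    · have : (a : ℤ) < (p : ℤ) ^ k := by exact_mod_cast ha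
      omega
  omega

lemma numOnes_add_pow_mul (n m : ℕ) :
    numOnes (n + 2 ^ lambda2 n * m) = numOnes n + numOnes m := by
  unfold numOnes lambda2
  rw [← Nat.digits_append_digits (by norm_num : 0 < 2), List.count_append]

theorem numOnes_appr_B2 (n : ℕ) (hn : 1 ≤ n) (z : ℤ_[2])
    (hz : (1 - 2 ^ lambda2 n) * z = (n : ℤ_[2])) (k : ℕ) :
    numOnes (z.appr k) =
      (k / lambda2 n) * numOnes n + numOnes (n % 2 ^ (k % lambda2 n)) := by
  have hL : 1 ≤ lambda2 n := by
    have h : Nat.digits 2 n ≠ [] := Nat.digits_ne_nil_iff_ne_zero.mpr (by omega)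
    exact List.length_pos_iff.mpr h
  have hzn : z - (n : ℤ_[2]) = 2 ^ lambda2 n * z := by linear_combination hz
  induction k using Nat.strong_induction_on with
  | _ k ih =>
    by_cases hk : k < lambda2 n
    · have ha : z.appr k = n % 2 ^ k := by
        apply appr_eq_of
        · exact Nat.mod_lt _ (by positivity)
        · rw [Ideal.mem_span_singleton]
          refine ⟨2 ^ (lambda2 n - k) * z + ((n / 2 ^ k : ℕ) : ℤ_[2]), ?_⟩
          have h1 := congrArg (fun m : ℕ => (m : ℤ_[2])) (Nat.mod_add_div n (2 ^ k))
          push_cast at h1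
          have h2 : (2 : ℤ_[2]) ^ lambda2 n = 2 ^ k * 2 ^ (lambda2 n - k) := by
            rw [← pow_add]; congr 1; omega
          linear_combination hzn - h1 + z * h2
      rw [ha, Nat.div_eq_of_lt hk, Nat.mod_eq_of_lt hk, zero_mul, zero_add]
    · push_neg at hk
      have h3 : 2 ^ lambda2 n * 2 ^ (k - lambda2 n) = 2 ^ k := by
        rw [← pow_add]; congr 1; omega
      have hrec : z.appr k = n + 2 ^ lambda2 n * z.appr (k - lambda2 n) := by
        apply appr_eq_of
        · have hn1 : n < 2 ^ lambda2 n := Nat.lt_base_pow_length_digits (by norm_num)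
          have hn2 := z.appr_lt (k - lambda2 n)
          calc n + 2 ^ lambda2 n * z.appr (k - lambda2 n)
              < 2 ^ lambda2 n + 2 ^ lambda2 n * z.appr (k - lambda2 n) :=
                Nat.add_lt_add_right hn1 _
            _ = 2 ^ lambda2 n * (z.appr (k - lambda2 n) + 1) := by ring
            _ ≤ 2 ^ lambda2 n * 2 ^ (k - lambda2 n) := Nat.mul_le_mul_left _ hn2
            _ = 2 ^ k := h3
        · rw [Ideal.mem_span_singleton]
          have hs := z.appr_spec (k - lambda2 n)
          rw [Ideal.mem_span_singleton] at hs
          obtain ⟨c, hc⟩ := hs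
          refine ⟨c, ?_⟩
          push_cast
          have h3' : (2 : ℤ_[2]) ^ lambda2 n * 2 ^ (k - lambda2 n) = 2 ^ k := by
            rw [← pow_add]; congr 1; omega
          linear_combination hzn + (2 : ℤ_[2]) ^ lambda2 n * hc + c * h3'
      rw [hrec, numOnes_add_pow_mul]
      have hlt : k - lambda2 n < k := by omega
      rw [ih _ hlt]
      have hke : k = (k - lambda2 n) + lambda2 n := by omega
      have hmod : k % lambda2 n = (k - lambda2 n) % lambda2 n := by
        conv_lhs => rw [hke]
        rw [Nat.add_mod_right]
      have hdiv : k / lambda2 n = (k - lambda2 n) / lambda2 n + 1 := by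
        conv_lhs => rw [hke]
        rw [Nat.add_div_right _ hL]
      rw [hmod, hdiv]
      ring
end
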